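/- arXiv:1311.2002 — 8 statements merged into one kernel-verified Lean document; each statement's English description precedes it below -/
import Mathlib

section
/- There exists a probability distribution on {0,1}³ with all three marginals Bernoulli(1/2) and pairwise concurrence probabilities P(Bi = Bj) = λij if and only if 1 ≤ λ12 + λ13 + λ23 ≤ 1 + 2·min{λ12, λ13, λ23}. -/
/-!
Group the eight outcomes into the four antipodal pairs `{x, ¬x}`: the pair where all coordinates
agree carries mass `a`, and the pair where only coordinate `k` disagrees with the other two carries
mass `bₖ`. Each concurrence probability is `a` plus one `bₖ`, so `λ₁₂ + λ₁₃ + λ₂₃ = 1 + 2a` and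
`1 + 2λ₁₂ - (λ₁₂ + λ₁₃ + λ₂₃) = 2b₃`, and symmetrically. The stated inequalities say exactly that
these masses are nonnegative. Conversely, splitting each pair mass evenly between `x` and `¬x`
gives a distribution invariant under flipping all coordinates, whose marginals are therefore
Bernoulli(1/2).
-/

open Finset

theorem two_nsmul_sum_filter_eq_sum_of_involutive {α M : Type*} [Fintype α] [AddCommMonoid M]
    {σ : α → α} (hσ : Function.Involutive σ) {p : α → M} (hp : ∀ x, p (σ x) = p x)
    (P : α → Prop) [DecidablePred P] (hP : ∀ x, P (σ x) ↔ ¬P x) :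
    2 • ∑ x ∈ univ.filter P, p x = ∑ x, p x := by
  have hswap : ∑ x ∈ univ.filter P, p x = ∑ x ∈ univ.filter (fun x => ¬P x), p x :=
    sum_nbij' σ σ (by simp [hP]) (by simp [hP]) (fun x _ => hσ x) (fun x _ => hσ x)
      (fun x _ => (hp x).symm)
  rw [two_nsmul, ← sum_filter_add_sum_filter_not univ P p, ← hswap]

theorem le_one_add_two_mul_min_iff {α : Type*} [Semiring α] [LinearOrder α] [IsOrderedRing α]
    {s a b c : α} :
    s ≤ 1 + 2 * min (min a b) c ↔ s ≤ 1 + 2 * a ∧ s ≤ 1 + 2 * b ∧ s ≤ 1 + 2 * c := by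
  rw [mul_min_of_nonneg _ _ zero_le_two, mul_min_of_nonneg _ _ zero_le_two, add_min, add_min,
    le_min_iff, le_min_iff, and_assoc]

namespace BoolCube

abbrev Cube := Bool × Bool × Bool

def antipode (x : Cube) : Cube := (!x.1, !x.2.1, !x.2.2)

theorem antipode_involutive : Function.Involutive antipode := fun x => by simp [antipode]

theorem sum_cube {M : Type*} [AddCommMonoid M] (f : Cube → M) :
    ∑ x, f x = f (false, false, false) + f (false, false, true) + f (false, true, false)
      + f (false, true, true) + f (true, false, false) + f (true, false, true)
      + f (true, true, false) + f (true, true, true) := by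
  simp only [Fintype.sum_prod_type, Fintype.sum_bool]
  abel

theorem concurrence_bounds_of_distribution {p : Cube → ℝ} {l12 l13 l23 : ℝ}
    (hp : ∀ x, 0 ≤ p x) (hsum : ∑ x, p x = 1)
    (e12 : ∑ x ∈ univ.filter (fun x : Cube => x.1 = x.2.1), p x = l12)
    (e13 : ∑ x ∈ univ.filter (fun x : Cube => x.1 = x.2.2), p x = l13)
    (e23 : ∑ x ∈ univ.filter (fun x : Cube => x.2.1 = x.2.2), p x = l23) :
    1 ≤ l12 + l13 + l23 ∧ l12 + l13 + l23 ≤ 1 + 2 * l12 ∧ l12 + l13 + l23 ≤ 1 + 2 * l13 ∧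
      l12 + l13 + l23 ≤ 1 + 2 * l23 := by
  simp only [sum_filter, sum_cube] at hsum e12 e13 e23
  simp only [Bool.false_eq_true, Bool.true_eq_false, if_true, if_false] at e12 e13 e23
  refine ⟨?_, ?_, ?_, ?_⟩ <;>
    linarith [hp (false, false, false), hp (false, false, true), hp (false, true, false),
      hp (false, true, true), hp (true, false, false), hp (true, false, true),
      hp (true, true, false), hp (true, true, true)]

/-- Mass of the antipodal pair of outcomes with disagreement pattern
`(x.1 ^^ x.2.1, x.1 ^^ x.2.2)`. -/
noncomputable def pairMass (l12 l13 l23 : ℝ) : Bool × Bool → ℝ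
  | (false, false) => (l12 + l13 + l23 - 1) / 2
  | (false, true) => (1 + l12 - l13 - l23) / 2
  | (true, false) => (1 + l13 - l12 - l23) / 2
  | (true, true) => (1 + l23 - l12 - l13) / 2

noncomputable def antipodalDistribution (l12 l13 l23 : ℝ) (x : Cube) : ℝ :=
  pairMass l12 l13 l23 (x.1 ^^ x.2.1, x.1 ^^ x.2.2) / 2

variable {l12 l13 l23 : ℝ}

theorem antipodalDistribution_antipode (x : Cube) :
    antipodalDistribution l12 l13 l23 (antipode x) = antipodalDistribution l12 l13 l23 x := by
  simp only [antipodalDistribution, antipode, Bool.not_xor_not]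

theorem antipodalDistribution_nonneg (h : 1 ≤ l12 + l13 + l23)
    (h12 : l12 + l13 + l23 ≤ 1 + 2 * l12) (h13 : l12 + l13 + l23 ≤ 1 + 2 * l13)
    (h23 : l12 + l13 + l23 ≤ 1 + 2 * l23) (x : Cube) :
    0 ≤ antipodalDistribution l12 l13 l23 x := by
  obtain ⟨a, b, c⟩ := x
  cases a <;> cases b <;> cases c <;>
    simp only [antipodalDistribution, pairMass, Bool.xor_false, Bool.xor_true, Bool.not_false,
      Bool.not_true] <;> linarith

theorem sum_antipodalDistribution : ∑ x, antipodalDistribution l12 l13 l23 x = 1 := by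
  simp only [sum_cube, antipodalDistribution, pairMass, Bool.xor_false, Bool.xor_true,
    Bool.not_false, Bool.not_true]
  ring

theorem concurrences_antipodalDistribution :
    ∑ x ∈ univ.filter (fun x : Cube => x.1 = x.2.1), antipodalDistribution l12 l13 l23 x = l12 ∧
    ∑ x ∈ univ.filter (fun x : Cube => x.1 = x.2.2), antipodalDistribution l12 l13 l23 x = l13 ∧
    ∑ x ∈ univ.filter (fun x : Cube => x.2.1 = x.2.2), antipodalDistribution l12 l13 l23 x =
      l23 := by
  simp only [sum_filter, sum_cube, antipodalDistribution, pairMass, Bool.xor_false,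
    Bool.xor_true, Bool.not_false, Bool.not_true, Bool.false_eq_true, Bool.true_eq_false, if_true,
    if_false]
  refine ⟨?_, ?_, ?_⟩ <;> ring

theorem sum_filter_antipodalDistribution_eq_half (P : Cube → Prop) [DecidablePred P]
    (hP : ∀ x, P (antipode x) ↔ ¬P x) :
    ∑ x ∈ univ.filter P, antipodalDistribution l12 l13 l23 x = 1 / 2 := by
  have := two_nsmul_sum_filter_eq_sum_of_involutive antipode_involutive
    (p := antipodalDistribution l12 l13 l23) antipodalDistribution_antipode P hP
  rw [sum_antipodalDistribution, two_nsmul] at this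
  linarith

end BoolCube

theorem stmt3_general (l12 l13 l23 : ℝ) :
    (∃ p : Bool × Bool × Bool → ℝ,
      (∀ x, 0 ≤ p x) ∧ (∑ x, p x) = 1 ∧
      (∑ x ∈ Finset.univ.filter (fun x : Bool × Bool × Bool => x.1 = true), p x) = 1/2 ∧
      (∑ x ∈ Finset.univ.filter (fun x : Bool × Bool × Bool => x.2.1 = true), p x) = 1/2 ∧
      (∑ x ∈ Finset.univ.filter (fun x : Bool × Bool × Bool => x.2.2 = true), p x) = 1/2 ∧
      (∑ x ∈ Finset.univ.filter (fun x : Bool × Bool × Bool => x.1 = x.2.1), p x) = l12 ∧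
      (∑ x ∈ Finset.univ.filter (fun x : Bool × Bool × Bool => x.1 = x.2.2), p x) = l13 ∧
      (∑ x ∈ Finset.univ.filter (fun x : Bool × Bool × Bool => x.2.1 = x.2.2), p x) = l23)
    ↔ (1 ≤ l12 + l13 + l23 ∧ l12 + l13 + l23 ≤ 1 + 2 * min (min l12 l13) l23) := by
  open BoolCube in
  rw [le_one_add_two_mul_min_iff]
  constructor
  · rintro ⟨p, hp, hsum, -, -, -, e12, e13, e23⟩
    exact concurrence_bounds_of_distribution hp hsum e12 e13 e23
  · rintro ⟨h, h12, h13, h23⟩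
    refine ⟨antipodalDistribution l12 l13 l23, antipodalDistribution_nonneg h h12 h13 h23,
      sum_antipodalDistribution, ?_, ?_, ?_, concurrences_antipodalDistribution⟩ <;>
      exact sum_filter_antipodalDistribution_eq_half _ (fun x => by simp [antipode])

theorem stmt3 (l12 l13 l23 : ℝ)
    (h12 : l12 ∈ Set.Icc (0:ℝ) 1) (h13 : l13 ∈ Set.Icc (0:ℝ) 1)
    (h23 : l23 ∈ Set.Icc (0:ℝ) 1) :
    (∃ p : Bool × Bool × Bool → ℝ,
      (∀ x, 0 ≤ p x) ∧ (∑ x, p x) = 1 ∧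
      (∑ x ∈ Finset.univ.filter (fun x : Bool × Bool × Bool => x.1 = true), p x) = 1/2 ∧
      (∑ x ∈ Finset.univ.filter (fun x : Bool × Bool × Bool => x.2.1 = true), p x) = 1/2 ∧
      (∑ x ∈ Finset.univ.filter (fun x : Bool × Bool × Bool => x.2.2 = true), p x) = 1/2 ∧
      (∑ x ∈ Finset.univ.filter (fun x : Bool × Bool × Bool => x.1 = x.2.1), p x) = l12 ∧
      (∑ x ∈ Finset.univ.filter (fun x : Bool × Bool × Bool => x.1 = x.2.2), p x) = l13 ∧
      (∑ x ∈ Finset.univ.filter (fun x : Bool × Bool × Bool => x.2.1 = x.2.2), p x) = l23)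
    ↔ (1 ≤ l12 + l13 + l23 ∧ l12 + l13 + l23 ≤ 1 + 2 * min (min l12 l13) l23) :=
  stmt3_general l12 l13 l23
end

section
/- If there exists a probability distribution on {0,1}³ with Bernoulli(1/2) marginals and pairwise concurrence probabilities λ12, λ13, λ23, then λ12 + λ13 + λ23 ≥ 1. -/
/-!
Every point of {0,1}³ has two equal coordinates, so the three concurrence events cover the
whole cube and the union bound gives `1 ≤ λ₁₂ + λ₁₃ + λ₂₃`.
-/

theorem Bool.eq_or_eq_or_eq (a b c : Bool) : a = b ∨ a = c ∨ b = c := by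
  revert a b c; decide

theorem Finset.sum_le_sum_filter_add_sum_filter_add_sum_filter {ι M : Type*}
    [AddCommMonoid M] [PartialOrder M] [IsOrderedAddMonoid M]
    (s : Finset ι) (f : ι → M) (hf : ∀ i ∈ s, 0 ≤ f i)
    (P Q R : ι → Prop) [DecidablePred P] [DecidablePred Q] [DecidablePred R]
    (hcover : ∀ i ∈ s, P i ∨ Q i ∨ R i) :
    ∑ i ∈ s, f i ≤
      ∑ i ∈ s.filter P, f i + ∑ i ∈ s.filter Q, f i + ∑ i ∈ s.filter R, f i := by
  simp only [Finset.sum_filter, ← Finset.sum_add_distrib]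
  refine Finset.sum_le_sum fun i hi => ?_
  have h0 := hf i hi
  have hP₀ := ite_nonneg h0 le_rfl (p := P i)
  have hQ₀ := ite_nonneg h0 le_rfl (p := Q i)
  have hR₀ := ite_nonneg h0 le_rfl (p := R i)
  rcases hcover i hi with hPi | hQi | hRi
  · rw [if_pos hPi]; exact le_add_of_le_of_nonneg (le_add_of_nonneg_right hQ₀) hR₀
  · rw [if_pos hQi]; exact le_add_of_le_of_nonneg (le_add_of_nonneg_left hP₀) hR₀
  · rw [if_pos hRi]; exact le_add_of_nonneg_left (add_nonneg hP₀ hQ₀)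

theorem stmt5_general (l12 l13 l23 : ℝ) (p : Bool × Bool × Bool → ℝ)
    (hpos : ∀ x, 0 ≤ p x) (hsum : (∑ x, p x) = 1)
    (hc12 : (∑ x ∈ Finset.univ.filter (fun x : Bool × Bool × Bool => x.1 = x.2.1), p x) = l12)
    (hc13 : (∑ x ∈ Finset.univ.filter (fun x : Bool × Bool × Bool => x.1 = x.2.2), p x) = l13)
    (hc23 : (∑ x ∈ Finset.univ.filter (fun x : Bool × Bool × Bool => x.2.1 = x.2.2), p x) = l23) :
    1 ≤ l12 + l13 + l23 := by
  rw [← hsum, ← hc12, ← hc13, ← hc23]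
  exact Finset.sum_le_sum_filter_add_sum_filter_add_sum_filter _ p (fun x _ => hpos x) _ _ _
    fun x _ => Bool.eq_or_eq_or_eq x.1 x.2.1 x.2.2

theorem stmt5 (l12 l13 l23 : ℝ) (p : Bool × Bool × Bool → ℝ)
    (hpos : ∀ x, 0 ≤ p x) (hsum : (∑ x, p x) = 1)
    (hm1 : (∑ x ∈ Finset.univ.filter (fun x : Bool × Bool × Bool => x.1 = true), p x) = 1/2)
    (hm2 : (∑ x ∈ Finset.univ.filter (fun x : Bool × Bool × Bool => x.2.1 = true), p x) = 1/2)
    (hm3 : (∑ x ∈ Finset.univ.filter (fun x : Bool × Bool × Bool => x.2.2 = true), p x) = 1/2)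
    (hc12 : (∑ x ∈ Finset.univ.filter (fun x : Bool × Bool × Bool => x.1 = x.2.1), p x) = l12)
    (hc13 : (∑ x ∈ Finset.univ.filter (fun x : Bool × Bool × Bool => x.1 = x.2.2), p x) = l13)
    (hc23 : (∑ x ∈ Finset.univ.filter (fun x : Bool × Bool × Bool => x.2.1 = x.2.2), p x) = l23) :
    1 ≤ l12 + l13 + l23 :=
  stmt5_general l12 l13 l23 p hpos hsum hc12 hc13 hc23
end

section
/- If there exists a probability distribution on {0,1}³ with Bernoulli(1/2) marginals and pairwise concurrence probabilities λ12, λ13, λ23, then λ12 + λ13 + λ23 ≤ 1 + 2·min{λ12, λ13, λ23}. -/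
/-!
Every outcome of three two-valued coordinates has either all three coordinates equal, and then
agrees on all three pairs, or exactly one agreeing pair. Hence
`λ₁₂ + λ₁₃ + λ₂₃ = 1 + 2 P(X₁ = X₂ = X₃)`, and the event `X₁ = X₂ = X₃` is contained in each of
the three concurrence events.
-/

open Finset

namespace Bool

theorem ite_eq_add_ite_eq_add_ite_eq {R : Type*} [Semiring R] (a b c : Bool) (r : R) :
    ((if a = b then r else 0) + (if a = c then r else 0) + if b = c then r else 0) =
      r + 2 * if a = b ∧ a = c then r else 0 := by
  cases a <;> cases b <;> cases c <;> simp [two_mul, add_assoc]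

end Bool

section Concurrence

variable {ι R : Type*} (s : Finset ι) (p : ι → R) (X Y Z : ι → Bool)

theorem sum_concurrences_eq [Semiring R] :
    ∑ i ∈ s with X i = Y i, p i + ∑ i ∈ s with X i = Z i, p i + ∑ i ∈ s with Y i = Z i, p i =
      ∑ i ∈ s, p i + 2 * ∑ i ∈ s with X i = Y i ∧ X i = Z i, p i := by
  simp only [sum_filter, ← sum_add_distrib, mul_sum, Bool.ite_eq_add_ite_eq_add_ite_eq]

theorem sum_concurrences_le [Semiring R] [LinearOrder R] [IsOrderedRing R]
    (hp : ∀ i ∈ s, 0 ≤ p i) :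
    ∑ i ∈ s with X i = Y i, p i + ∑ i ∈ s with X i = Z i, p i + ∑ i ∈ s with Y i = Z i, p i ≤
      ∑ i ∈ s, p i + 2 * min (min (∑ i ∈ s with X i = Y i, p i) (∑ i ∈ s with X i = Z i, p i))
        (∑ i ∈ s with Y i = Z i, p i) := by
  have le_of_imp {P : ι → Prop} [DecidablePred P] (h : ∀ i, X i = Y i ∧ X i = Z i → P i) :
      ∑ i ∈ s with X i = Y i ∧ X i = Z i, p i ≤ ∑ i ∈ s with P i, p i :=
    sum_le_sum_of_subset_of_nonneg (monotone_filter_right s fun i _ ↦ h i)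
      fun i hi _ ↦ hp i (mem_of_mem_filter i hi)
  rw [sum_concurrences_eq]
  gcongr _ + 2 * ?_
  · exact zero_le_two
  exact le_min (le_min (le_of_imp fun _ h ↦ h.1) (le_of_imp fun _ h ↦ h.2))
    (le_of_imp fun _ h ↦ h.1.symm.trans h.2)

end Concurrence

theorem stmt6_general (l12 l13 l23 : ℝ) (p : Bool × Bool × Bool → ℝ)
    (hpos : ∀ x, 0 ≤ p x) (hsum : (∑ x, p x) = 1)
    (hc12 : (∑ x ∈ Finset.univ.filter (fun x : Bool × Bool × Bool => x.1 = x.2.1), p x) = l12)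
    (hc13 : (∑ x ∈ Finset.univ.filter (fun x : Bool × Bool × Bool => x.1 = x.2.2), p x) = l13)
    (hc23 : (∑ x ∈ Finset.univ.filter (fun x : Bool × Bool × Bool => x.2.1 = x.2.2), p x) = l23) :
    l12 + l13 + l23 ≤ 1 + 2 * min (min l12 l13) l23 := by
  have h := sum_concurrences_le univ p Prod.fst (·.2.1) (·.2.2) fun x _ ↦ hpos x
  rwa [hc12, hc13, hc23, hsum] at h

theorem stmt6 (l12 l13 l23 : ℝ) (p : Bool × Bool × Bool → ℝ)
    (hpos : ∀ x, 0 ≤ p x) (hsum : (∑ x, p x) = 1)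
    (hm1 : (∑ x ∈ Finset.univ.filter (fun x : Bool × Bool × Bool => x.1 = true), p x) = 1/2)
    (hm2 : (∑ x ∈ Finset.univ.filter (fun x : Bool × Bool × Bool => x.2.1 = true), p x) = 1/2)
    (hm3 : (∑ x ∈ Finset.univ.filter (fun x : Bool × Bool × Bool => x.2.2 = true), p x) = 1/2)
    (hc12 : (∑ x ∈ Finset.univ.filter (fun x : Bool × Bool × Bool => x.1 = x.2.1), p x) = l12)
    (hc13 : (∑ x ∈ Finset.univ.filter (fun x : Bool × Bool × Bool => x.1 = x.2.2), p x) = l13)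
    (hc23 : (∑ x ∈ Finset.univ.filter (fun x : Bool × Bool × Bool => x.2.1 = x.2.2), p x) = l23) :
    l12 + l13 + l23 ≤ 1 + 2 * min (min l12 l13) l23 :=
  stmt6_general l12 l13 l23 p hpos hsum hc12 hc13 hc23
end

section
/- The symmetric matrix with 1's on the diagonal and all off-diagonal entries equal to −0.4 in dimension 3 is positive semidefinite, yet there is no distribution on {0,1}³ with Bernoulli(1/2) marginals whose pairwise correlations all equal −0.4 (equivalently, whose concurrence probabilities all equal 0.3). -/
/-!
The equicorrelation matrix `(1 - c) • 1 + c • J` has quadratic form `(1 - c)‖x‖² + c (∑ xᵢ)²`,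
which by Cauchy–Schwarz `(∑ xᵢ)² ≤ n ‖x‖²` is nonnegative as long as `-1/(n-1) ≤ c ≤ 1`;
for `n = 3` this allows `c = -0.4`. On the other hand, among three bits some two always agree,
so the three concurrence probabilities of any distribution on `{0,1}³` sum to at least `1 > 3 · 0.3`.
-/

open Finset Matrix

namespace Matrix

def equicorrelation (n : Type*) [DecidableEq n] (c : ℝ) : Matrix n n ℝ :=
  of fun i j => if i = j then 1 else c

variable {n : Type*} [DecidableEq n]

theorem equicorrelation_eq (c : ℝ) :
    equicorrelation n c = (1 - c) • (1 : Matrix n n ℝ) + c • of fun _ _ => 1 := by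
  ext i j
  by_cases h : i = j <;> simp [equicorrelation, h]

variable [Fintype n]

theorem dotProduct_equicorrelation_mulVec (c : ℝ) (x : n → ℝ) :
    star x ⬝ᵥ (equicorrelation n c *ᵥ x) = (1 - c) * ∑ i, x i ^ 2 + c * (∑ i, x i) ^ 2 := by
  rw [equicorrelation_eq, add_mulVec, smul_mulVec, smul_mulVec, one_mulVec, dotProduct_add,
    dotProduct_smul, dotProduct_smul, star_trivial]
  simp only [dotProduct, mulVec, of_apply, one_mul, smul_eq_mul, sq, Finset.sum_mul]

theorem posSemidef_equicorrelation {c : ℝ} (hc : c ≤ 1)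
    (hc' : 0 ≤ 1 + c * (Fintype.card n - 1)) : (equicorrelation n c).PosSemidef := by
  refine .of_dotProduct_mulVec_nonneg ?_ fun x => ?_
  · ext i j
    simp only [equicorrelation, conjTranspose_apply, of_apply, star_trivial, eq_comm]
  have hCS : (∑ i, x i) ^ 2 ≤ Fintype.card n * ∑ i, x i ^ 2 := sq_sum_le_card_mul_sum_sq
  have hsq : 0 ≤ ∑ i, x i ^ 2 := by positivity
  rw [dotProduct_equicorrelation_mulVec]
  rcases le_total 0 c with h | h
  · nlinarith [sq_nonneg (∑ i, x i)]
  · nlinarith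

end Matrix

def concurrence {α R : Type*} [Fintype α] [AddCommMonoid R] (p : α → R) (f g : α → Bool) : R :=
  ∑ x ∈ univ.filter (fun x => f x = g x), p x

theorem sum_le_concurrence_add_concurrence_add_concurrence {α R : Type*} [Fintype α]
    [AddCommMonoid R] [PartialOrder R] [IsOrderedAddMonoid R] {p : α → R} (hp : ∀ x, 0 ≤ p x)
    (f g h : α → Bool) :
    ∑ x, p x ≤ concurrence p f g + concurrence p f h + concurrence p g h := by
  simp only [concurrence, sum_filter, ← sum_add_distrib]
  refine sum_le_sum fun x _ => ?_
  have := hp x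
  cases f x <;> cases g x <;> cases h x <;> simp <;>
    exact le_add_of_le_of_nonneg (le_add_of_nonneg_right this) this

theorem stmt7 :
    Matrix.PosSemidef
      (!![1, -0.4, -0.4; -0.4, 1, -0.4; -0.4, -0.4, 1] : Matrix (Fin 3) (Fin 3) ℝ) ∧
    ¬ (∃ p : Bool × Bool × Bool → ℝ,
      (∀ x, 0 ≤ p x) ∧ (∑ x, p x) = 1 ∧
      (∑ x ∈ Finset.univ.filter (fun x : Bool × Bool × Bool => x.1 = true), p x) = 1/2 ∧
      (∑ x ∈ Finset.univ.filter (fun x : Bool × Bool × Bool => x.2.1 = true), p x) = 1/2 ∧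
      (∑ x ∈ Finset.univ.filter (fun x : Bool × Bool × Bool => x.2.2 = true), p x) = 1/2 ∧
      (∑ x ∈ Finset.univ.filter (fun x : Bool × Bool × Bool => x.1 = x.2.1), p x) = 0.3 ∧
      (∑ x ∈ Finset.univ.filter (fun x : Bool × Bool × Bool => x.1 = x.2.2), p x) = 0.3 ∧
      (∑ x ∈ Finset.univ.filter (fun x : Bool × Bool × Bool => x.2.1 = x.2.2), p x) = 0.3) := by
  constructor
  · convert posSemidef_equicorrelation (n := Fin 3) (c := -0.4) (by norm_num) (by norm_num)
      using 1
    ext i j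
    fin_cases i <;> fin_cases j <;> rfl
  · rintro ⟨p, hp, hsum, -, -, -, h12, h13, h23⟩
    have := sum_le_concurrence_add_concurrence_add_concurrence hp
      Prod.fst (fun x => x.2.1) (fun x => x.2.2)
    rw [hsum, concurrence, concurrence, concurrence, h12, h13, h23] at this
    norm_num at this
end

section
/- There exists a random vector (X1,…,Xn) with Xi ~ Bernoulli(pi) and pairwise concurrence probabilities P(Xi = Xj) = λij if and only if there exists a random vector (B1,…,B_{n+1}) with all marginals Bernoulli(1/2), P(Bi = Bj) = λij for 1 ≤ i < j ≤ n, and P(Bi = B_{n+1}) = pi for 1 ≤ i ≤ n. -/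
/-!
Flip a vector `X` with the prescribed law by an independent fair coin `S`: the vector
`B = (X₁ == S, …, Xₙ == S, S)` has fair marginals, `Bᵢ = Bⱼ ↔ Xᵢ = Xⱼ` and `Bᵢ = Bₙ₊₁ ↔ Xᵢ = 1`.
Conversely `(x, s) ↦ (x₁ == s, …, xₙ == s, s)` is a bijection, so pushing `B` back along it and
forgetting `s` gives `X = (B₁ == Bₙ₊₁, …, Bₙ == Bₙ₊₁)` with the required law.
-/

open Finset

section FiberSums

variable {α β γ : Type*} [Fintype α] [Fintype β] [Fintype γ] (e : α × β ≃ γ)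

theorem Equiv.sum_eq_sum_fiber (r : γ → ℝ) : ∑ y, r y = ∑ a, ∑ b, r (e (a, b)) := by
  rw [← e.sum_comp, Fintype.sum_prod_type]

theorem Equiv.sum_filter_eq_sum_filter_fiber (r : γ → ℝ) (P : γ → Prop) [DecidablePred P]
    (A : α → Prop) [DecidablePred A] (hPA : ∀ z, P (e z) ↔ A z.1) :
    ∑ y ∈ univ.filter P, r y = ∑ a ∈ univ.filter A, ∑ b, r (e (a, b)) := by
  rw [sum_filter, sum_filter, e.sum_eq_sum_fiber]
  refine sum_congr rfl fun a _ => ?_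
  by_cases ha : A a
  · simp only [hPA, ha, if_true]
  · simp only [hPA, ha, if_false, sum_const_zero]

theorem Equiv.sum_filter_symm_fst_of_existsUnique (f : α → ℝ) (P : γ → Prop)
    [DecidablePred P] (hP : ∀ a, ∃! b, P (e (a, b))) :
    ∑ y ∈ univ.filter P, f (e.symm y).1 = ∑ a, f a := by
  rw [sum_filter, e.sum_eq_sum_fiber]
  refine sum_congr rfl fun a _ => ?_
  obtain ⟨b, hb, hunique⟩ := hP a
  rw [sum_eq_single b (fun b' _ hne => if_neg fun h => hne (hunique b' h)) (by simp)]
  simp [hb]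

end FiberSums

def snocXnorEquiv (n : ℕ) : (Fin n → Bool) × Bool ≃ (Fin (n + 1) → Bool) where
  toFun z := Fin.snoc (fun i => z.1 i == z.2) z.2
  invFun y := (fun i => y i.castSucc == y (Fin.last n), y (Fin.last n))
  left_inv := by
    rintro ⟨x, s⟩
    ext i <;> simp only [Fin.snoc_castSucc, Fin.snoc_last]
    cases x i <;> cases s <;> rfl
  right_inv y := by
    ext j
    refine Fin.lastCases ?_ (fun i => ?_) j
    · simp
    · simp only [Fin.snoc_castSucc]
      cases y i.castSucc <;> cases y (Fin.last n) <;> rfl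

namespace snocXnorEquiv

variable {n : ℕ}

@[simp]
theorem apply_castSucc (x : Fin n → Bool) (s : Bool) (i : Fin n) :
    snocXnorEquiv n (x, s) i.castSucc = (x i == s) := by
  simp [snocXnorEquiv]

@[simp]
theorem apply_last (x : Fin n → Bool) (s : Bool) : snocXnorEquiv n (x, s) (Fin.last n) = s := by
  simp [snocXnorEquiv]

theorem castSucc_eq_castSucc_iff (z : (Fin n → Bool) × Bool) (i j : Fin n) :
    snocXnorEquiv n z i.castSucc = snocXnorEquiv n z j.castSucc ↔ z.1 i = z.1 j := by
  obtain ⟨x, s⟩ := z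
  cases x i <;> cases x j <;> cases s <;> simp_all

theorem castSucc_eq_last_iff (z : (Fin n → Bool) × Bool) (i : Fin n) :
    snocXnorEquiv n z i.castSucc = snocXnorEquiv n z (Fin.last n) ↔ z.1 i = true := by
  obtain ⟨x, s⟩ := z
  cases x i <;> cases s <;> simp_all

theorem existsUnique_apply_eq_true (x : Fin n → Bool) (k : Fin (n + 1)) :
    ∃! s, snocXnorEquiv n (x, s) k = true := by
  refine Fin.lastCases ?_ (fun i => ?_) k
  · exact ⟨true, by simp⟩
  · refine ⟨x i, by simp, fun s hs => ?_⟩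
    cases s <;> cases h : x i <;> simp_all

end snocXnorEquiv

theorem stmt8_general (n : ℕ) (p : Fin n → ℝ) (L : Fin n → Fin n → ℝ) :
    (∃ q : (Fin n → Bool) → ℝ,
      (∀ x, 0 ≤ q x) ∧ (∑ x, q x) = 1 ∧
      (∀ i, (∑ x ∈ Finset.univ.filter (fun x : Fin n → Bool => x i = true), q x) = p i) ∧
      (∀ i j, i < j →
        (∑ x ∈ Finset.univ.filter (fun x : Fin n → Bool => x i = x j), q x) = L i j))
    ↔
    (∃ r : (Fin (n+1) → Bool) → ℝ,
      (∀ x, 0 ≤ r x) ∧ (∑ x, r x) = 1 ∧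
      (∀ i : Fin (n+1),
        (∑ x ∈ Finset.univ.filter (fun x : Fin (n+1) → Bool => x i = true), r x) = 1/2) ∧
      (∀ i j : Fin n, i < j →
        (∑ x ∈ Finset.univ.filter
          (fun x : Fin (n+1) → Bool => x i.castSucc = x j.castSucc), r x) = L i j) ∧
      (∀ i : Fin n,
        (∑ x ∈ Finset.univ.filter
          (fun x : Fin (n+1) → Bool => x i.castSucc = x (Fin.last n)), r x) = p i)) := by
  set e := snocXnorEquiv n
  have halves (q : (Fin n → Bool) → ℝ) (x : Fin n → Bool) :
      ∑ s, q (e.symm (e (x, s))).1 / 2 = q x := by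
    simp only [Equiv.symm_apply_apply, Fintype.sum_bool, add_halves]
  constructor
  · rintro ⟨q, hq0, hq1, hqp, hqL⟩
    refine ⟨fun y => q (e.symm y).1 / 2, fun y => div_nonneg (hq0 _) zero_le_two, ?_, fun k => ?_,
      fun i j hij => ?_, fun i => ?_⟩
    · simpa only [e.sum_eq_sum_fiber, halves] using hq1
    · rw [e.sum_filter_symm_fst_of_existsUnique (fun x => q x / 2) _
        (fun x => snocXnorEquiv.existsUnique_apply_eq_true x k), ← sum_div, hq1]
    · rw [e.sum_filter_eq_sum_filter_fiber _ _ (fun x => x i = x j)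
        (fun z => snocXnorEquiv.castSucc_eq_castSucc_iff z i j)]
      simpa only [halves] using hqL i j hij
    · rw [e.sum_filter_eq_sum_filter_fiber _ _ (fun x => x i = true)
        (fun z => snocXnorEquiv.castSucc_eq_last_iff z i)]
      simpa only [halves] using hqp i
  · rintro ⟨r, hr0, hr1, -, hrL, hrp⟩
    refine ⟨fun x => ∑ s, r (e (x, s)), fun x => sum_nonneg fun s _ => hr0 _,
      (e.sum_eq_sum_fiber r).symm.trans hr1, fun i => ?_, fun i j hij => ?_⟩
    · exact (e.sum_filter_eq_sum_filter_fiber r _ _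
        (fun z => snocXnorEquiv.castSucc_eq_last_iff z i)).symm.trans (hrp i)
    · exact (e.sum_filter_eq_sum_filter_fiber r _ _
        (fun z => snocXnorEquiv.castSucc_eq_castSucc_iff z i j)).symm.trans (hrL i j hij)

theorem stmt8 (n : ℕ) (p : Fin n → ℝ) (hp : ∀ i, p i ∈ Set.Icc (0:ℝ) 1)
    (L : Fin n → Fin n → ℝ) (hL : ∀ i j, i < j → L i j ∈ Set.Icc (0:ℝ) 1) :
    (∃ q : (Fin n → Bool) → ℝ,
      (∀ x, 0 ≤ q x) ∧ (∑ x, q x) = 1 ∧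
      (∀ i, (∑ x ∈ Finset.univ.filter (fun x : Fin n → Bool => x i = true), q x) = p i) ∧
      (∀ i j, i < j →
        (∑ x ∈ Finset.univ.filter (fun x : Fin n → Bool => x i = x j), q x) = L i j))
    ↔
    (∃ r : (Fin (n+1) → Bool) → ℝ,
      (∀ x, 0 ≤ r x) ∧ (∑ x, r x) = 1 ∧
      (∀ i : Fin (n+1),
        (∑ x ∈ Finset.univ.filter (fun x : Fin (n+1) → Bool => x i = true), r x) = 1/2) ∧
      (∀ i j : Fin n, i < j →
        (∑ x ∈ Finset.univ.filter
          (fun x : Fin (n+1) → Bool => x i.castSucc = x j.castSucc), r x) = L i j) ∧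
      (∀ i : Fin n,
        (∑ x ∈ Finset.univ.filter
          (fun x : Fin (n+1) → Bool => x i.castSucc = x (Fin.last n)), r x) = p i)) :=
  stmt8_general n p L
end

section
/- If (X1,…,Xn) are random variables with Xi ~ Bernoulli(pi) and P(Xi = Xj) = λij, and B ~ Bernoulli(1/2) is independent of (X1,…,Xn), then setting Bi = B·Xi + (1−B)(1−Xi) for i ≤ n and B_{n+1} = B yields marginals Bernoulli(1/2), P(Bi = B_{n+1}) = pi, and P(Bi = Bj) = λij for i ≠ j ≤ n. -/
open MeasureTheory ProbabilityTheory
open scoped ENNReal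

/-! Since `Bv i` flips all `X i` simultaneously when `B = false`, the events `{Bv i = Bv j}` and
`{X i = X j}` coincide, and `{Bv i = B} = {X i = true}`. Finally `Bv i = true` exactly when
`B = X i`, and a fair coin independent of `X i` matches it with probability `1/2`. -/

namespace ProbabilityTheory

variable {Ω α : Type*} [MeasurableSpace Ω] {μ : Measure Ω}

theorem IndepFun.measure_eq_eq_of_measure_preimage_singleton [Fintype α] [MeasurableSpace α]
    [MeasurableSingletonClass α] [IsProbabilityMeasure μ] {B Y : Ω → α} {c : ℝ≥0∞}
    (hindep : IndepFun B Y μ) (hmB : Measurable B) (hmY : Measurable Y)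
    (hB : ∀ a, μ (B ⁻¹' {a}) = c) :
    μ {ω | B ω = Y ω} = c := by
  have hdiag : {ω | B ω = Y ω} = ⋃ a, B ⁻¹' {a} ∩ Y ⁻¹' {a} := by
    ext ω; simp [eq_comm]
  calc μ {ω | B ω = Y ω} = ∑ a, μ (B ⁻¹' {a} ∩ Y ⁻¹' {a}) := by
        rw [hdiag, measure_iUnion, tsum_fintype]
        · exact fun a b hab => Disjoint.mono Set.inter_subset_left Set.inter_subset_left
            ((Set.disjoint_singleton.2 hab).preimage B)
        · exact fun a => (hmB (measurableSet_singleton a)).inter (hmY (measurableSet_singleton a))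
    _ = c * ∑ a, μ (Y ⁻¹' {a}) := by
        rw [Finset.mul_sum]
        refine Finset.sum_congr rfl fun a _ => ?_
        rw [hindep.measure_inter_preimage_eq_mul _ _ (measurableSet_singleton a)
          (measurableSet_singleton a), hB]
    _ = c := by
        rw [sum_measure_preimage_singleton _ fun a _ => hmY (measurableSet_singleton a)]
        simp

theorem measure_preimage_singleton_eq_half {B : Ω → Bool} [IsProbabilityMeasure μ]
    (hmB : Measurable B) (hB : μ (B ⁻¹' {true}) = 1 / 2) (b : Bool) :
    μ (B ⁻¹' {b}) = 1 / 2 := by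
  cases b
  · have hcompl : B ⁻¹' {false} = (B ⁻¹' {true})ᶜ := by ext ω; simp
    rw [hcompl, prob_compl_eq_one_sub (hmB (measurableSet_singleton true)), hB, one_div,
      ENNReal.one_sub_inv_two]
  · exact hB

end ProbabilityTheory

theorem stmt10 {Ω : Type*} [MeasureSpace Ω] [IsProbabilityMeasure (ℙ : Measure Ω)]
    (n : ℕ) (X : Fin n → Ω → Bool) (B : Ω → Bool)
    (hmX : ∀ i, Measurable (X i)) (hmB : Measurable B)
    (p : Fin n → ℝ≥0∞) (hp : ∀ i, ℙ {ω | X i ω = true} = p i)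
    (L : Fin n → Fin n → ℝ≥0∞)
    (hL : ∀ i j, i ≠ j → ℙ {ω | X i ω = X j ω} = L i j)
    (hB : ℙ {ω | B ω = true} = 1/2)
    (hindep : IndepFun B (fun ω i => X i ω) ℙ) :
    let Bv : Fin n → Ω → Bool := fun i ω => if B ω then X i ω else !(X i ω)
    (∀ i, ℙ {ω | Bv i ω = true} = 1/2) ∧
    (∀ i, ℙ {ω | Bv i ω = B ω} = p i) ∧
    (∀ i j, i ≠ j → ℙ {ω | Bv i ω = Bv j ω} = L i j) := by
  intro Bv
  refine ⟨fun i => ?_, fun i => ?_, fun i j hij => ?_⟩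
  · have hindep_i : IndepFun B (X i) ℙ := hindep.comp measurable_id (measurable_pi_apply i)
    rw [← hindep_i.measure_eq_eq_of_measure_preimage_singleton hmB (hmX i)
      (measure_preimage_singleton_eq_half hmB hB)]
    congr 1; ext ω; simp only [Bv, Set.mem_ofPred_eq]; cases B ω <;> simp
  · rw [← hp i]
    congr 1; ext ω; simp only [Bv, Set.mem_ofPred_eq]; cases B ω <;> simp
  · rw [← hL i j hij]
    congr 1; ext ω; simp only [Bv, Set.mem_ofPred_eq]; cases B ω <;> simp
end

section
/- Let λ12, λ13, λ23 ∈ [0,1] satisfy 1 ≤ λ12+λ13+λ23 ≤ 1 + 2·min{λ12,λ13,λ23}. Let U be uniform on [0,1] and B3 ~ Bernoulli(1/2) independent of U. Define X1 = 1{U ≤ λ13}, X2 = 1{U ∈ [(1+λ13−λ23−λ12)/2, (1+λ13+λ23−λ12)/2]}, B1 = B3·X1 + (1−B3)(1−X1), B2 = B3·X2 + (1−B3)(1−X2). Then B1, B2, B3 each have Bernoulli(1/2) marginals and P(Bi = Bj) = λij for all i < j. -/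
/-!
Whatever the value of `B3`, we have `B1 = B3 ↔ X1`, `B2 = B3 ↔ X2` and `B1 = B2 ↔ (X1 ↔ X2)`.
So the three agreement probabilities are lengths of subsets of `[0, 1]`: of `[0, λ13]`, of
`[a, b]` (length `λ23`) and of `[a, λ13] ∪ (b, 1]` (length `λ12`), where the constraints on the
`λij` are exactly what gives `0 ≤ a ≤ λ13 ≤ b ≤ 1`. Each `Bi` is fair, being the bit `Xi`
flipped by the independent fair coin `B3`.
-/

open MeasureTheory ProbabilityTheory Set

section BoolFlip

variable (b x y : Bool)

lemma ite_not_eq_cond_iff : (if b then x else !x) = b ↔ x = true := by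
  cases b <;> cases x <;> decide

lemma ite_not_eq_ite_not_iff : (if b then x else !x) = (if b then y else !y) ↔ x = y := by
  cases b <;> cases x <;> cases y <;> decide

end BoolFlip

lemma Bool.preimage_false_eq_compl {α : Type*} (f : α → Bool) :
    f ⁻¹' {false} = (f ⁻¹' {true})ᶜ := by
  ext; simp

section FairCoin

variable {Ω : Type*} [MeasurableSpace Ω] {μ : Measure Ω} [IsProbabilityMeasure μ] {X B : Ω → Bool}

lemma measure_preimage_false_eq_half (hB : Measurable B) (hB_half : μ (B ⁻¹' {true}) = 1 / 2) :
    μ (B ⁻¹' {false}) = 1 / 2 := by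
  rw [Bool.preimage_false_eq_compl, prob_compl_eq_one_sub (hB (measurableSet_singleton _)),
    hB_half, one_div, ENNReal.one_sub_inv_two]

lemma measure_ite_not_eq_true_of_indepFun (hX : Measurable X) (hB : Measurable B)
    (hXB : IndepFun X B μ) (hB_half : μ (B ⁻¹' {true}) = 1 / 2) :
    μ {ω | (if B ω then X ω else !X ω) = true} = 1 / 2 := by
  have hset : {ω | (if B ω then X ω else !X ω) = true}
      = (X ⁻¹' {true} ∩ B ⁻¹' {true}) ∪ (X ⁻¹' {false} ∩ B ⁻¹' {false}) := by
    ext ω; cases hXω : X ω <;> cases hBω : B ω <;> simp [hXω, hBω]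
  have hdisj : Disjoint (X ⁻¹' {true} ∩ B ⁻¹' {true}) (X ⁻¹' {false} ∩ B ⁻¹' {false}) :=
    Set.disjoint_left.mpr fun ω h h' => by simp_all
  have hX_total : μ (X ⁻¹' {true}) + μ (X ⁻¹' {false}) = 1 := by
    rw [Bool.preimage_false_eq_compl, measure_add_measure_compl (hX (measurableSet_singleton _)),
      measure_univ]
  rw [hset, measure_union hdisj
      ((hX (measurableSet_singleton _)).inter (hB (measurableSet_singleton _))),
    hXB.measure_inter_preimage_eq_mul _ _ (measurableSet_singleton _) (measurableSet_singleton _),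
    hXB.measure_inter_preimage_eq_mul _ _ (measurableSet_singleton _) (measurableSet_singleton _),
    measure_preimage_false_eq_half hB hB_half, hB_half, ← add_mul, hX_total, one_mul]

end FairCoin

lemma measurable_decide_mem {α : Type*} [MeasurableSpace α] {s : Set α} [DecidablePred (· ∈ s)]
    (hs : MeasurableSet s) : Measurable fun x => decide (x ∈ s) :=
  measurable_to_bool (by simpa [preimage] using hs)

lemma setOf_le_iff_mem_Icc {α : Type*} [LinearOrder α] {a b c : α} (hac : a ≤ c) (hcb : c ≤ b) :
    {x | x ≤ c ↔ x ∈ Icc a b} = Icc a c ∪ Ioi b := by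
  ext x
  simp only [mem_ofPred_eq, mem_union, mem_Icc, mem_Ioi]
  grind

lemma interval_bounds_of_sum_le_one_add_two_min {l12 l13 l23 : ℝ} (hs1 : 1 ≤ l12 + l13 + l23)
    (hs2 : l12 + l13 + l23 ≤ 1 + 2 * min (min l12 l13) l23) :
    0 ≤ (1 + l13 - l23 - l12) / 2 ∧ (1 + l13 - l23 - l12) / 2 ≤ l13 ∧
      l13 ≤ (1 + l13 + l23 - l12) / 2 ∧ (1 + l13 + l23 - l12) / 2 ≤ 1 := by
  have hmin12 : min (min l12 l13) l23 ≤ l12 := (min_le_left _ _).trans (min_le_left _ _)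
  have hmin13 : min (min l12 l13) l23 ≤ l13 := (min_le_left _ _).trans (min_le_right _ _)
  have hmin23 : min (min l12 l13) l23 ≤ l23 := min_le_right _ _
  refine ⟨?_, ?_, ?_, ?_⟩ <;> linarith

lemma volume_restrict_unitInterval_Iic {c : ℝ} (hc : c ≤ 1) :
    volume.restrict (Icc (0 : ℝ) 1) (Iic c) = ENNReal.ofReal c := by
  have h : Iic c ∩ Icc 0 1 = Icc 0 c := by
    ext x; simp only [mem_inter_iff, mem_Iic, mem_Icc]; grind
  rw [Measure.restrict_apply measurableSet_Iic, h, Real.volume_Icc, sub_zero]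

lemma volume_restrict_unitInterval_Icc {a b : ℝ} (ha : 0 ≤ a) (hb : b ≤ 1) :
    volume.restrict (Icc (0 : ℝ) 1) (Icc a b) = ENNReal.ofReal (b - a) := by
  rw [Measure.restrict_apply measurableSet_Icc, Icc_inter_Icc, max_eq_left ha, min_eq_left hb,
    Real.volume_Icc]

lemma volume_restrict_unitInterval_Ioi {b : ℝ} (hb : 0 ≤ b) :
    volume.restrict (Icc (0 : ℝ) 1) (Ioi b) = ENNReal.ofReal (1 - b) := by
  have h : Ioi b ∩ Icc 0 1 = Ioc b 1 := by
    ext x; simp only [mem_inter_iff, mem_Ioi, mem_Icc, mem_Ioc]; grind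
  rw [Measure.restrict_apply measurableSet_Ioi, h, Real.volume_Ioc]

lemma volume_restrict_unitInterval_Icc_union_Ioi {a b c : ℝ} (ha : 0 ≤ a) (hac : a ≤ c)
    (hcb : c ≤ b) (hb : b ≤ 1) :
    volume.restrict (Icc (0 : ℝ) 1) (Icc a c ∪ Ioi b) = ENNReal.ofReal (c - a + (1 - b)) := by
  have hdisj : Disjoint (Icc a c) (Ioi b) :=
    Set.disjoint_left.mpr fun x hx hx' => (hx.2.trans hcb).not_gt hx'
  rw [measure_union hdisj measurableSet_Ioi, volume_restrict_unitInterval_Icc ha (hcb.trans hb),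
    volume_restrict_unitInterval_Ioi (ha.trans (hac.trans hcb)),
    ENNReal.ofReal_add (sub_nonneg.mpr hac) (sub_nonneg.mpr hb)]

theorem stmt13_general {Ω : Type*} [MeasureSpace Ω] [IsProbabilityMeasure (ℙ : Measure Ω)]
    (l12 l13 l23 : ℝ)
    (hs1 : 1 ≤ l12 + l13 + l23)
    (hs2 : l12 + l13 + l23 ≤ 1 + 2 * min (min l12 l13) l23)
    (U : Ω → ℝ) (B3 : Ω → Bool) (hU : Measurable U) (hB3 : Measurable B3)
    (hUdist : Measure.map U ℙ = volume.restrict (Set.Icc 0 1))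
    (hB3dist : ℙ {ω | B3 ω = true} = 1/2)
    (hindep : IndepFun U B3 ℙ) :
    let X1 : Ω → Bool := fun ω => decide (U ω ≤ l13)
    let X2 : Ω → Bool := fun ω =>
      decide (U ω ∈ Set.Icc ((1 + l13 - l23 - l12)/2) ((1 + l13 + l23 - l12)/2))
    let B1 : Ω → Bool := fun ω => if B3 ω then X1 ω else !(X1 ω)
    let B2 : Ω → Bool := fun ω => if B3 ω then X2 ω else !(X2 ω)
    ℙ {ω | B1 ω = true} = 1/2 ∧ ℙ {ω | B2 ω = true} = 1/2 ∧
    ℙ {ω | B1 ω = B2 ω} = ENNReal.ofReal l12 ∧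
    ℙ {ω | B1 ω = B3 ω} = ENNReal.ofReal l13 ∧
    ℙ {ω | B2 ω = B3 ω} = ENNReal.ofReal l23 := by
  intro X1 X2 B1 B2
  obtain ⟨ha, hal, hlb, hb⟩ := interval_bounds_of_sum_le_one_add_two_min hs1 hs2
  set a := (1 + l13 - l23 - l12) / 2
  set b := (1 + l13 + l23 - l12) / 2
  have hP : ∀ s, MeasurableSet s → ℙ (U ⁻¹' s) = volume.restrict (Icc (0 : ℝ) 1) s :=
    fun s hs => by rw [← Measure.map_apply hU hs, hUdist]
  have hf1 : Measurable fun x : ℝ => decide (x ≤ l13) :=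
    measurable_decide_mem (s := Iic l13) measurableSet_Iic
  have hf2 : Measurable fun x : ℝ => decide (x ∈ Icc a b) := measurable_decide_mem measurableSet_Icc
  refine ⟨measure_ite_not_eq_true_of_indepFun (hf1.comp hU) hB3
      (hindep.comp hf1 measurable_id) hB3dist,
    measure_ite_not_eq_true_of_indepFun (hf2.comp hU) hB3
      (hindep.comp hf2 measurable_id) hB3dist, ?_, ?_, ?_⟩
  · have hset : {ω | B1 ω = B2 ω} = U ⁻¹' {x | x ≤ l13 ↔ x ∈ Icc a b} := by
      ext ω
      exact (ite_not_eq_ite_not_iff _ _ _).trans decide_eq_decide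
    rw [hset, setOf_le_iff_mem_Icc hal hlb, hP _ (measurableSet_Icc.union measurableSet_Ioi),
      volume_restrict_unitInterval_Icc_union_Ioi ha hal hlb hb]
    congr 1; ring
  · have hset : {ω | B1 ω = B3 ω} = U ⁻¹' Iic l13 := by
      ext ω
      exact (ite_not_eq_cond_iff _ _).trans decide_eq_true_iff
    rw [hset, hP _ measurableSet_Iic, volume_restrict_unitInterval_Iic (hlb.trans hb)]
  · have hset : {ω | B2 ω = B3 ω} = U ⁻¹' Icc a b := by
      ext ω
      exact (ite_not_eq_cond_iff _ _).trans decide_eq_true_iff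
    rw [hset, hP _ measurableSet_Icc, volume_restrict_unitInterval_Icc ha hb]
    congr 1; ring

theorem stmt13 {Ω : Type*} [MeasureSpace Ω] [IsProbabilityMeasure (ℙ : Measure Ω)]
    (l12 l13 l23 : ℝ)
    (h12 : l12 ∈ Set.Icc (0:ℝ) 1) (h13 : l13 ∈ Set.Icc (0:ℝ) 1)
    (h23 : l23 ∈ Set.Icc (0:ℝ) 1)
    (hs1 : 1 ≤ l12 + l13 + l23)
    (hs2 : l12 + l13 + l23 ≤ 1 + 2 * min (min l12 l13) l23)
    (U : Ω → ℝ) (B3 : Ω → Bool) (hU : Measurable U) (hB3 : Measurable B3)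
    (hUdist : Measure.map U ℙ = volume.restrict (Set.Icc 0 1))
    (hB3dist : ℙ {ω | B3 ω = true} = 1/2)
    (hindep : IndepFun U B3 ℙ) :
    let X1 : Ω → Bool := fun ω => decide (U ω ≤ l13)
    let X2 : Ω → Bool := fun ω =>
      decide (U ω ∈ Set.Icc ((1 + l13 - l23 - l12)/2) ((1 + l13 + l23 - l12)/2))
    let B1 : Ω → Bool := fun ω => if B3 ω then X1 ω else !(X1 ω)
    let B2 : Ω → Bool := fun ω => if B3 ω then X2 ω else !(X2 ω)
    ℙ {ω | B1 ω = true} = 1/2 ∧ ℙ {ω | B2 ω = true} = 1/2 ∧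
    ℙ {ω | B1 ω = B2 ω} = ENNReal.ofReal l12 ∧
    ℙ {ω | B1 ω = B3 ω} = ENNReal.ofReal l13 ∧
    ℙ {ω | B2 ω = B3 ω} = ENNReal.ofReal l23 :=
  stmt13_general l12 l13 l23 hs1 hs2 U B3 hU hB3 hUdist hB3dist hindep
end

section
/- Let F1, F2 be cdfs of square-integrable distributions with positive variance, U ~ Unif([0,1]), and (B1,B2) Bernoulli(1/2) random variables independent of U with P(B1=B2) = λ. Define Xi = Bi·Fi⁻¹(U) + (1−Bi)·Fi⁻¹(1−U) for i=1,2. Then Corr(X1,X2) = λ·ρ⁺ + (1−λ)·ρ⁻, where ρ⁺ = Corr(F1⁻¹(U), F2⁻¹(U)) and ρ⁻ = Corr(F1⁻¹(U), F2⁻¹(1−U)). -/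
open MeasureTheory ProbabilityTheory

/-- Pseudoinverse of a cdf. -/
noncomputable def pinv (F : ℝ → ℝ) (u : ℝ) : ℝ := sInf {x | u ≤ F x}

/-- Pearson correlation of two real random variables. -/
noncomputable def corr {Ω : Type*} [MeasureSpace Ω] (X Y : Ω → ℝ) : ℝ :=
  ((∫ ω, X ω * Y ω) - (∫ ω, X ω) * (∫ ω, Y ω)) /
    (Real.sqrt (variance X ℙ) * Real.sqrt (variance Y ℙ))

/-!
Since `1 - U` has the same law as `U` and `B₁` is independent of `U`, the variable
`V₁ = if B₁ then U else 1 - U` is again uniform, so `X₁ = F₁⁻¹(V₁)` has the law of `F₁⁻¹(U)`;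
likewise for `X₂`. Hence means and variances are those of `F₁⁻¹(U)` and `F₂⁻¹(U)`, and only the
mixed moment changes: conditionally on `(B₁, B₂)` it is `E[F₁⁻¹(U) F₂⁻¹(U)]` when `B₁ = B₂` and
`E[F₁⁻¹(U) F₂⁻¹(1 - U)]` otherwise (after the measure-preserving substitution `U ↦ 1 - U`).
-/

open Set

lemma measurePreserving_one_sub_Icc :
    MeasurePreserving (fun u : ℝ => 1 - u) (volume.restrict (Icc 0 1))
      (volume.restrict (Icc 0 1)) := by
  have h := (volume.measurePreserving_sub_left (1 : ℝ)).restrict_preimage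
    (measurableSet_Icc (a := (0 : ℝ)) (b := 1))
  rwa [preimage_const_sub_Icc, sub_zero, sub_self] at h

lemma pinv_monotoneOn {F : ℝ → ℝ} (hmono : Monotone F)
    (hbot : Filter.Tendsto F Filter.atBot (nhds 0))
    (htop : Filter.Tendsto F Filter.atTop (nhds 1)) :
    MonotoneOn (pinv F) (Ioo 0 1) := by
  intro u hu v hv huv
  have hne : {x | v ≤ F x}.Nonempty := by
    obtain ⟨x, hx⟩ := (htop.eventually (eventually_gt_nhds hv.2)).exists
    exact ⟨x, hx.le⟩
  have hbdd : BddBelow {x | u ≤ F x} := by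
    obtain ⟨x₀, hx₀⟩ := (hbot.eventually (eventually_lt_nhds hu.1)).exists
    refine ⟨x₀, fun x hx => le_of_not_gt fun hlt => ?_⟩
    exact (hx.trans (hmono hlt.le)).not_gt hx₀
  exact csInf_le_csInf hbdd hne fun x hx => huv.trans hx

lemma aemeasurable_pinv {F : ℝ → ℝ} (hmono : Monotone F)
    (hbot : Filter.Tendsto F Filter.atBot (nhds 0))
    (htop : Filter.Tendsto F Filter.atTop (nhds 1)) :
    AEMeasurable (pinv F) (volume.restrict (Icc 0 1)) := by
  have h := aemeasurable_restrict_of_monotoneOn (μ := volume) measurableSet_Ioo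
    (pinv_monotoneOn hmono hbot htop)
  rwa [Measure.restrict_congr_set Ioo_ae_eq_Icc] at h

namespace ProbabilityTheory

section Finite

variable {Ω β : Type*} [MeasurableSpace Ω] {μ : Measure Ω} [Fintype β] [MeasurableSpace β]
  [MeasurableSingletonClass β] {B : Ω → β} {f : β → Ω → ℝ}

theorem integral_apply_eq_sum_of_indepFun (hB : Measurable B) (hBf : ∀ b, IndepFun B (f b) μ)
    (hf : ∀ b, Integrable (f b) μ) :
    ∫ ω, f (B ω) ω ∂μ = ∑ b, μ.real (B ⁻¹' {b}) * ∫ ω, f b ω ∂μ := by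
  have hsplit : (fun ω => f (B ω) ω) = fun ω => ∑ b, (B ⁻¹' {b}).indicator (f b) ω := by
    funext ω
    rw [Finset.sum_eq_single_of_mem (B ω) (Finset.mem_univ _) fun b _ hb => ?_]
    · simp
    · exact indicator_of_notMem (show ω ∉ B ⁻¹' {b} from fun h => hb h.symm) _
  rw [hsplit, integral_finsetSum _ fun b _ => (hf b).indicator (hB (measurableSet_singleton b))]
  refine Finset.sum_congr rfl fun b _ => ?_
  have hφ : Measurable (({b} : Set β).indicator (1 : β → ℝ)) :=
    measurable_one.indicator (measurableSet_singleton b)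
  have hind : IndepFun (fun ω => ({b} : Set β).indicator (1 : β → ℝ) (B ω)) (f b) μ :=
    (hBf b).comp hφ measurable_id
  have hmul :
      (B ⁻¹' {b}).indicator (f b) = fun ω => ({b} : Set β).indicator 1 (B ω) * f b ω := by
    funext ω; by_cases h : B ω = b <;> simp [h]
  rw [hmul, hind.integral_fun_mul_eq_mul_integral (hφ.comp hB).aestronglyMeasurable
    (hf b).aestronglyMeasurable]
  congr 1
  rw [← integral_indicator_one (hB (measurableSet_singleton b))]
  rfl

theorem integral_apply_eq_of_indepFun_of_ite [IsFiniteMeasure μ] {p : β → Prop}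
    [DecidablePred p] {c d : ℝ}
    (hB : Measurable B) (hBf : ∀ b, IndepFun B (f b) μ) (hf : ∀ b, Integrable (f b) μ)
    (hfp : ∀ b, ∫ ω, f b ω ∂μ = if p b then c else d) :
    ∫ ω, f (B ω) ω ∂μ = μ.real {ω | p (B ω)} * c + μ.real {ω | ¬ p (B ω)} * d := by
  simp_rw [integral_apply_eq_sum_of_indepFun hB hBf hf, hfp, mul_ite, Finset.sum_ite,
    ← Finset.sum_mul]
  rw [sum_measureReal_preimage_singleton _ fun b _ => hB (measurableSet_singleton b),
    sum_measureReal_preimage_singleton _ fun b _ => hB (measurableSet_singleton b)]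
  congr 3 <;> ext ω <;> simp

end Finite

section Reflection

variable {Ω α : Type*} [MeasurableSpace Ω] [MeasurableSpace α] {μ : Measure Ω}

theorem HasLaw.ite_of_indepFun [IsProbabilityMeasure μ] {ν : Measure α} {U : Ω → α}
    {B : Ω → Bool} {r : α → α} (hUν : HasLaw U ν μ) (hU : Measurable U) (hB : Measurable B)
    (hBU : IndepFun B U μ) (hr : MeasurePreserving r ν ν) :
    HasLaw (fun ω => if B ω then U ω else r (U ω)) ν μ := by
  have hT : MeasurableSet (B ⁻¹' {true}) := hB (measurableSet_singleton true)
  have hW : Measurable fun ω => if B ω then U ω else r (U ω) :=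
    Measurable.ite hT hU (hr.measurable.comp hU)
  refine ⟨hW.aemeasurable, Measure.ext fun S hS => ?_⟩
  have hrS : μ (U ⁻¹' (r ⁻¹' S)) = μ (U ⁻¹' S) := by
    rw [← Measure.map_apply hU (hr.measurable hS), hUν.map_eq,
      hr.measure_preimage hS.nullMeasurableSet, ← hUν.map_eq, Measure.map_apply hU hS]
  have htrue : (fun ω => if B ω then U ω else r (U ω)) ⁻¹' S ∩ B ⁻¹' {true}
      = B ⁻¹' {true} ∩ U ⁻¹' S := by
    ext ω; by_cases h : B ω <;> simp [h]
  have hfalse : (fun ω => if B ω then U ω else r (U ω)) ⁻¹' S \ B ⁻¹' {true}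
      = (B ⁻¹' {true})ᶜ ∩ U ⁻¹' (r ⁻¹' S) := by
    ext ω; by_cases h : B ω <;> simp [h]
  rw [Measure.map_apply hW hS, ← measure_inter_add_sdiff _ hT, htrue, hfalse,
    hBU.measure_inter_preimage_eq_mul _ _ (measurableSet_singleton true) hS, ← preimage_compl,
    hBU.measure_inter_preimage_eq_mul _ _ (measurableSet_singleton true).compl (hr.measurable hS),
    hrS, preimage_compl, ← add_mul, prob_add_prob_compl hT, one_mul, ← Measure.map_apply hU hS,
    hUν.map_eq]

theorem identDistrib_ite_of_indepFun [IsProbabilityMeasure μ] {ν : Measure α} {U : Ω → α}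
    {B : Ω → Bool} {r : α → α} {Y : α → ℝ} (hUν : HasLaw U ν μ) (hU : Measurable U)
    (hB : Measurable B) (hBU : IndepFun B U μ) (hr : MeasurePreserving r ν ν)
    (hY : AEMeasurable Y ν) :
    IdentDistrib (fun ω => if B ω then Y (U ω) else Y (r (U ω))) (fun ω => Y (U ω)) μ μ := by
  have hW := hUν.ite_of_indepFun hU hB hBU hr
  have h := (hW.identDistrib hUν).comp_of_aemeasurable (u := Y) (by rwa [hW.map_eq])
  convert h using 1
  · funext ω
    exact (apply_ite Y _ _ _).symm
  · rfl

theorem integral_ite_mul_ite_of_indepFun [IsProbabilityMeasure μ] {ν : Measure α} {U : Ω → α}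
    {B₁ B₂ : Ω → Bool} {r : α → α} {Y₁ Y₂ : α → ℝ} (hUν : HasLaw U ν μ)
    (hB₁ : Measurable B₁) (hB₂ : Measurable B₂) (hBU : IndepFun (fun ω => (B₁ ω, B₂ ω)) U μ)
    (hr : MeasurePreserving r ν ν) (hrr : Function.Involutive r)
    (hY₁ : AEMeasurable Y₁ ν) (hY₂ : AEMeasurable Y₂ ν)
    (h₁ : MemLp (fun ω => Y₁ (U ω)) 2 μ) (h₂ : MemLp (fun ω => Y₂ (U ω)) 2 μ) :
    ∫ ω, (if B₁ ω then Y₁ (U ω) else Y₁ (r (U ω))) *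
        (if B₂ ω then Y₂ (U ω) else Y₂ (r (U ω))) ∂μ =
      μ.real {ω | B₁ ω = B₂ ω} * ∫ ω, Y₁ (U ω) * Y₂ (U ω) ∂μ +
        μ.real {ω | ¬ B₁ ω = B₂ ω} * ∫ ω, Y₁ (U ω) * Y₂ (r (U ω)) ∂μ := by
  have hrU : IdentDistrib (fun ω => r (U ω)) U μ μ := (hr.comp_hasLaw hUν).identDistrib hUν
  have hYr {Y : α → ℝ} (hY : AEMeasurable Y ν) (b : Bool) :
      AEMeasurable (fun u => if b then Y u else Y (r u)) ν := by
    cases b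
    · exact hY.comp_quasiMeasurePreserving hr.quasiMeasurePreserving
    · exact hY
  have hmem {Y : α → ℝ} (hY : AEMeasurable Y ν) (h : MemLp (fun ω => Y (U ω)) 2 μ) (b : Bool) :
      MemLp (fun ω => if b then Y (U ω) else Y (r (U ω))) 2 μ := by
    cases b
    · exact (hrU.comp_of_aemeasurable (u := Y) (by rwa [hrU.map_eq, hUν.map_eq])).memLp_iff.2 h
    · exact h
  have hswap {g : α → ℝ} (hg : AEMeasurable g ν) : ∫ ω, g (r (U ω)) ∂μ = ∫ ω, g (U ω) ∂μ :=
    (hrU.comp_of_aemeasurable (u := g) (by rwa [hrU.map_eq, hUν.map_eq])).integral_eq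
  refine integral_apply_eq_of_indepFun_of_ite (p := fun b : Bool × Bool => b.1 = b.2)
    (f := fun b ω => (if b.1 then Y₁ (U ω) else Y₁ (r (U ω))) *
      (if b.2 then Y₂ (U ω) else Y₂ (r (U ω))))
    (hB₁.prodMk hB₂) (fun b => ?_) (fun b => (hmem hY₁ h₁ b.1).integrable_mul (hmem hY₂ h₂ b.2))
    (fun b => ?_)
  · exact hBU.comp₀ (φ := id) (ψ := fun u => (if b.1 then Y₁ u else Y₁ (r u)) *
      (if b.2 then Y₂ u else Y₂ (r u))) (hB₁.prodMk hB₂).aemeasurable hUν.aemeasurable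
      aemeasurable_id (by rw [hUν.map_eq]; exact (hYr hY₁ b.1).mul (hYr hY₂ b.2))
  · obtain ⟨_ | _, _ | _⟩ := b
    · simpa using hswap (hY₁.mul hY₂)
    · simpa [hrr _] using hswap (hY₁.mul (hYr hY₂ false))
    · simp
    · simp

end Reflection

end ProbabilityTheory

theorem stmt18_general {Ω : Type*} [MeasureSpace Ω] [IsProbabilityMeasure (ℙ : Measure Ω)]
    (F1 F2 : ℝ → ℝ)
    (hmono1 : Monotone F1)
    (hbot1 : Filter.Tendsto F1 Filter.atBot (nhds 0))
    (htop1 : Filter.Tendsto F1 Filter.atTop (nhds 1))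
    (hmono2 : Monotone F2)
    (hbot2 : Filter.Tendsto F2 Filter.atBot (nhds 0))
    (htop2 : Filter.Tendsto F2 Filter.atTop (nhds 1))
    (U : Ω → ℝ) (hU : Measurable U)
    (hUdist : Measure.map U ℙ = volume.restrict (Set.Icc 0 1))
    (B1 B2 : Ω → Bool) (hB1 : Measurable B1) (hB2 : Measurable B2)
    (lam : ℝ) (hlam : lam ∈ Set.Icc (0:ℝ) 1)
    (hconc : ℙ {ω | B1 ω = B2 ω} = ENNReal.ofReal lam)
    (hindep : IndepFun (fun ω => (B1 ω, B2 ω)) U ℙ)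
    (hL2₁ : MemLp (fun ω => pinv F1 (U ω)) 2 ℙ)
    (hL2₂ : MemLp (fun ω => pinv F2 (U ω)) 2 ℙ) :
    let X1 : Ω → ℝ := fun ω => if B1 ω then pinv F1 (U ω) else pinv F1 (1 - U ω)
    let X2 : Ω → ℝ := fun ω => if B2 ω then pinv F2 (U ω) else pinv F2 (1 - U ω)
    corr X1 X2 =
      lam * corr (fun ω => pinv F1 (U ω)) (fun ω => pinv F2 (U ω)) +
      (1 - lam) * corr (fun ω => pinv F1 (U ω)) (fun ω => pinv F2 (1 - U ω)) := by
  intro X1 X2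
  have hUν : HasLaw U (volume.restrict (Icc 0 1)) ℙ := ⟨hU.aemeasurable, hUdist⟩
  have hr := measurePreserving_one_sub_Icc
  have hY₁ := aemeasurable_pinv hmono1 hbot1 htop1
  have hY₂ := aemeasurable_pinv hmono2 hbot2 htop2
  have hX₁ : IdentDistrib X1 (fun ω => pinv F1 (U ω)) ℙ ℙ :=
    identDistrib_ite_of_indepFun hUν hU hB1 (hindep.comp measurable_fst measurable_id) hr hY₁
  have hX₂ : IdentDistrib X2 (fun ω => pinv F2 (U ω)) ℙ ℙ :=
    identDistrib_ite_of_indepFun hUν hU hB2 (hindep.comp measurable_snd measurable_id) hr hY₂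
  have hX₂' : IdentDistrib (fun ω => pinv F2 (1 - U ω)) (fun ω => pinv F2 (U ω)) ℙ ℙ :=
    ((hr.comp_hasLaw hUν).identDistrib hUν).comp_of_aemeasurable (u := pinv F2)
      (by rwa [(hr.comp_hasLaw hUν).map_eq])
  have hsame : (ℙ : Measure Ω).real {ω | B1 ω = B2 ω} = lam := by
    rw [measureReal_def, hconc, ENNReal.toReal_ofReal hlam.1]
  have hdiff : (ℙ : Measure Ω).real {ω | ¬ B1 ω = B2 ω} = 1 - lam := by
    rw [← hsame]; exact probReal_compl_eq_one_sub (measurableSet_eq_fun hB1 hB2)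
  have hprod := integral_ite_mul_ite_of_indepFun hUν hB1 hB2 hindep hr
    (fun u => sub_sub_cancel 1 u) hY₁ hY₂ hL2₁ hL2₂
  rw [hsame, hdiff] at hprod
  unfold corr
  rw [hprod, hX₁.integral_eq, hX₂.integral_eq, hX₁.variance_eq, hX₂.variance_eq,
    hX₂'.integral_eq, hX₂'.variance_eq]
  ring

theorem stmt18 {Ω : Type*} [MeasureSpace Ω] [IsProbabilityMeasure (ℙ : Measure Ω)]
    (F1 F2 : ℝ → ℝ)
    (hmono1 : Monotone F1) (hrc1 : ∀ x, ContinuousWithinAt F1 (Set.Ici x) x)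
    (hbot1 : Filter.Tendsto F1 Filter.atBot (nhds 0))
    (htop1 : Filter.Tendsto F1 Filter.atTop (nhds 1))
    (hmono2 : Monotone F2) (hrc2 : ∀ x, ContinuousWithinAt F2 (Set.Ici x) x)
    (hbot2 : Filter.Tendsto F2 Filter.atBot (nhds 0))
    (htop2 : Filter.Tendsto F2 Filter.atTop (nhds 1))
    (U : Ω → ℝ) (hU : Measurable U)
    (hUdist : Measure.map U ℙ = volume.restrict (Set.Icc 0 1))
    (B1 B2 : Ω → Bool) (hB1 : Measurable B1) (hB2 : Measurable B2)
    (hB1dist : ℙ {ω | B1 ω = true} = 1/2) (hB2dist : ℙ {ω | B2 ω = true} = 1/2)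
    (lam : ℝ) (hlam : lam ∈ Set.Icc (0:ℝ) 1)
    (hconc : ℙ {ω | B1 ω = B2 ω} = ENNReal.ofReal lam)
    (hindep : IndepFun (fun ω => (B1 ω, B2 ω)) U ℙ)
    (hL2₁ : MemLp (fun ω => pinv F1 (U ω)) 2 ℙ)
    (hL2₂ : MemLp (fun ω => pinv F2 (U ω)) 2 ℙ)
    (hvar1 : 0 < variance (fun ω => pinv F1 (U ω)) ℙ)
    (hvar2 : 0 < variance (fun ω => pinv F2 (U ω)) ℙ) :
    let X1 : Ω → ℝ := fun ω => if B1 ω then pinv F1 (U ω) else pinv F1 (1 - U ω)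
    let X2 : Ω → ℝ := fun ω => if B2 ω then pinv F2 (U ω) else pinv F2 (1 - U ω)
    corr X1 X2 =
      lam * corr (fun ω => pinv F1 (U ω)) (fun ω => pinv F2 (U ω)) +
      (1 - lam) * corr (fun ω => pinv F1 (U ω)) (fun ω => pinv F2 (1 - U ω)) :=
  stmt18_general F1 F2 hmono1 hbot1 htop1 hmono2 hbot2 htop2 U hU hUdist B1 B2 hB1 hB2 lam hlam
    hconc hindep hL2₁ hL2₂
end
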